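/- The six-vertex-type deformed double Yangian R-matrix R_{V6}(β;r), with nonzero entries R[11,11]=R[22,22]=1, R[12,12]=R[21,21]=sin(iβ/r)/sin((π+iβ)/r), R[12,21]=R[21,12]=sin(π/r)/sin((π+iβ)/r), is mapped by the rigid twist K = V⊗V with V=(1/√2)[[1,−i],[−1,−i]] to the eight-vertex-type matrix R_{V8}(β;r): K₂₁ R_{V6}(β;r) K₁₂⁻¹ = R_{V8}(β;r), where R_{V8} has entries a=cos(iβ/2r)cos(π/2r)/cos((π+iβ)/2r) on the diagonal corners (positions [11,11],[22,22]), d=−sin(iβ/2r)sin(π/2r)/cos((π+iβ)/2r) on the antidiagonal corners ([11,22],[22,11]), b=sin(iβ/2r)cos(π/2r)/sin((π+iβ)/2r) at [12,12],[21,21], and c=cos(iβ/2r)sin(π/2r)/sin((π+iβ)/2r) at [12,21],[21,12]. -/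
import Mathlib


open Matrix Complex

/-- The flip (permutation) matrix on `V ⊗ V`, basis ordering (11,12,21,22). -/
def P4 : Matrix (Fin 4) (Fin 4) ℂ :=
  !![1, 0, 0, 0;
     0, 0, 1, 0;
     0, 1, 0, 0;
     0, 0, 0, 1]

/-- The rigid twist `K = V ⊗ V` with `V = (1/√2)[[1,−i],[−1,−i]]`. -/
noncomputable def Kmat : Matrix (Fin 4) (Fin 4) ℂ :=
  (2 : ℂ)⁻¹ • !![1, -I, -I, -1;
                 -1, -I, I, -1;
                 -1, I, -I, -1;
                 1, I, I, -1]

/-- The six-vertex-type deformed double Yangian R-matrix `R_{V6}(β;r)`, written in the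
variables `s₁ = sin x`, `c₁ = cos x`, `s₂ = sin y`, `c₂ = cos y` where `x = iβ/2r`,
`y = π/2r` (so e.g. `sin(iβ/r)/sin((π+iβ)/r) = s₁c₁/((s₁c₂+c₁s₂)(c₁c₂−s₁s₂))`). -/
noncomputable def RV6 (s1 c1 s2 c2 : ℂ) : Matrix (Fin 4) (Fin 4) ℂ :=
  !![1, 0, 0, 0;
     0, s1 * c1 / ((s1 * c2 + c1 * s2) * (c1 * c2 - s1 * s2)),
        s2 * c2 / ((s1 * c2 + c1 * s2) * (c1 * c2 - s1 * s2)), 0;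
     0, s2 * c2 / ((s1 * c2 + c1 * s2) * (c1 * c2 - s1 * s2)),
        s1 * c1 / ((s1 * c2 + c1 * s2) * (c1 * c2 - s1 * s2)), 0;
     0, 0, 0, 1]

/-- The eight-vertex-type deformed double Yangian R-matrix `R_{V8}(β;r)` in the same
variables: `a = c₁c₂/cos(x+y)`, `d = −s₁s₂/cos(x+y)`, `b = s₁c₂/sin(x+y)`,
`c = c₁s₂/sin(x+y)`. -/
noncomputable def RV8 (s1 c1 s2 c2 : ℂ) : Matrix (Fin 4) (Fin 4) ℂ :=
  !![c1 * c2 / (c1 * c2 - s1 * s2), 0, 0, -(s1 * s2) / (c1 * c2 - s1 * s2);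
     0, s1 * c2 / (s1 * c2 + c1 * s2), c1 * s2 / (s1 * c2 + c1 * s2), 0;
     0, c1 * s2 / (s1 * c2 + c1 * s2), s1 * c2 / (s1 * c2 + c1 * s2), 0;
     -(s1 * s2) / (c1 * c2 - s1 * s2), 0, 0, c1 * c2 / (c1 * c2 - s1 * s2)]

noncomputable def Kinv : Matrix (Fin 4) (Fin 4) ℂ :=
  (2 : ℂ)⁻¹ • !![1, -1, -1, 1;
                 I, I, -I, -I;
                 I, -I, I, -I;
                 -1, -1, -1, -1]

lemma KKinv : Kmat * Kinv = 1 := by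
  ext i j
  fin_cases i <;> fin_cases j <;>
    simp [Kmat, Kinv, Matrix.mul_apply, Fin.sum_univ_four, Matrix.one_apply] <;>
    ring_nf <;> simp [Complex.I_sq] <;> ring

lemma Kmat_inv : Kmat⁻¹ = Kinv := by
  rw [Matrix.inv_eq_right_inv KKinv]

noncomputable def M6 (u v : ℂ) : Matrix (Fin 4) (Fin 4) ℂ :=
  !![1, 0, 0, 0;
     0, (u+v)/2, (u-v)/2, 0;
     0, (u-v)/2, (u+v)/2, 0;
     0, 0, 0, 1]

noncomputable def M8 (u v : ℂ) : Matrix (Fin 4) (Fin 4) ℂ :=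
  !![(1+u)/2, 0, 0, (1-u)/2;
     0, (1+v)/2, (1-v)/2, 0;
     0, (1-v)/2, (1+v)/2, 0;
     (1-u)/2, 0, 0, (1+u)/2]

set_option maxHeartbeats 1000000 in
lemma key (u v : ℂ) : Kmat * M6 u v = M8 u v * Kmat := by
  ext i j
  fin_cases i <;> fin_cases j <;>
    simp [Kmat, M6, M8, Matrix.mul_apply, Fin.sum_univ_four, Matrix.vecHead,
      Matrix.vecTail] <;> ring

lemma RV6_eq (s1 c1 s2 c2 : ℂ)
    (hpy1 : s1 ^ 2 + c1 ^ 2 = 1) (hpy2 : s2 ^ 2 + c2 ^ 2 = 1)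
    (hc : c1 * c2 - s1 * s2 ≠ 0) (hs : s1 * c2 + c1 * s2 ≠ 0) :
    RV6 s1 c1 s2 c2 =
      M6 ((c1*c2 + s1*s2)/(c1*c2 - s1*s2)) ((s1*c2 - c1*s2)/(s1*c2 + c1*s2)) := by
  have e1 : (c1*c2 + s1*s2)*(s1*c2 + c1*s2) + (c1*c2 - s1*s2)*(s1*c2 - c1*s2)
      = 2*(s1*c1) := by linear_combination (2*s1*c1) * hpy2
  have e2 : (c1*c2 + s1*s2)*(s1*c2 + c1*s2) - (c1*c2 - s1*s2)*(s1*c2 - c1*s2)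
      = 2*(s2*c2) := by linear_combination (2*s2*c2) * hpy1
  have h1 : s1 * c1 / ((s1 * c2 + c1 * s2) * (c1 * c2 - s1 * s2)) =
      ((c1*c2 + s1*s2)/(c1*c2 - s1*s2) + (s1*c2 - c1*s2)/(s1*c2 + c1*s2)) / 2 := by
    rw [div_add_div _ _ hc hs, e1]
    field_simp
  have h2 : s2 * c2 / ((s1 * c2 + c1 * s2) * (c1 * c2 - s1 * s2)) =
      ((c1*c2 + s1*s2)/(c1*c2 - s1*s2) - (s1*c2 - c1*s2)/(s1*c2 + c1*s2)) / 2 := by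
    rw [div_sub_div _ _ hc hs, e2]
    field_simp
  rw [RV6, M6, h1, h2]

lemma RV8_eq (s1 c1 s2 c2 : ℂ)
    (hc : c1 * c2 - s1 * s2 ≠ 0) (hs : s1 * c2 + c1 * s2 ≠ 0) :
    RV8 s1 c1 s2 c2 =
      M8 ((c1*c2 + s1*s2)/(c1*c2 - s1*s2)) ((s1*c2 - c1*s2)/(s1*c2 + c1*s2)) := by
  have ha : c1 * c2 / (c1 * c2 - s1 * s2) =
      (1 + (c1*c2 + s1*s2)/(c1*c2 - s1*s2)) / 2 := by field_simp; ring
  have hd : -(s1 * s2) / (c1 * c2 - s1 * s2) =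
      (1 - (c1*c2 + s1*s2)/(c1*c2 - s1*s2)) / 2 := by field_simp; ring
  have hb : s1 * c2 / (s1 * c2 + c1 * s2) =
      (1 + (s1*c2 - c1*s2)/(s1*c2 + c1*s2)) / 2 := by field_simp; ring
  have hcc : c1 * s2 / (s1 * c2 + c1 * s2) =
      (1 - (s1*c2 - c1*s2)/(s1*c2 + c1*s2)) / 2 := by field_simp; ring
  rw [RV8, M8, ha, hd, hb, hcc]

lemma PKP : P4 * Kmat * P4 = Kmat := by
  ext i j
  fin_cases i <;> fin_cases j <;>
    simp [P4, Kmat, Matrix.mul_apply, Fin.sum_univ_four, Matrix.vecHead, Matrix.vecTail]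

/-- The rigid twist `K` maps `R_{V6}` to `R_{V8}`:  `K₂₁ = K` and
`K₂₁ R_{V6}(β;r) K₁₂⁻¹ = R_{V8}(β;r)`. -/
theorem stmt8 (s1 c1 s2 c2 : ℂ)
    (hpy1 : s1 ^ 2 + c1 ^ 2 = 1) (hpy2 : s2 ^ 2 + c2 ^ 2 = 1)
    (hc : c1 * c2 - s1 * s2 ≠ 0) (hs : s1 * c2 + c1 * s2 ≠ 0) :
    P4 * Kmat * P4 = Kmat ∧
    (P4 * Kmat * P4) * RV6 s1 c1 s2 c2 * Kmat⁻¹ = RV8 s1 c1 s2 c2 := by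
  refine ⟨PKP, ?_⟩
  rw [PKP, Kmat_inv, RV6_eq s1 c1 s2 c2 hpy1 hpy2 hc hs, RV8_eq s1 c1 s2 c2 hc hs,
    Matrix.mul_assoc, ← Matrix.mul_assoc Kmat, key, Matrix.mul_assoc, KKinv,
    Matrix.mul_one]
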